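/- Let H ∈ (0,1) and T > 0. Define, for 0 < h and φ(h) ≤ t ≤ T − h, Q(t,h) := (4 − 2^{2H}) h^{2H} − 2^{2H−1}(t+h)^{2H} − 3·2^{2H} t^{2H} − 2^{2H−1}(t−h)^{2H} + 2(2t+h)^{2H} + 2(2t−h)^{2H} (this equals E[(S^H_{t+h} − 2S^H_t + S^H_{t−h})²] for the sub-fractional Brownian motion S^H). Then for every φ ∈ Ψ, lim_{h→0+} sup_{φ(h)≤t≤T−h} | Q(t,h)/h^{2H} − (4 − 2^{2H}) | = 0; i.e. the sub-fractional Brownian motion satisfies the hypothesis of the regular-partition convergence result with g₀(t) ≡ 4 − 2^{2H} and γ = H. -/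

import Mathlib

/-!
Put `p = 2H`. Since `(2t ± h)^p = 2^p (t ± h/2)^p`, the numerator `Q(t,h) - (4 - 2^p) h^p` is
`2^p (2 Δ_{h/2} - Δ_h / 2)`, where `Δ_δ = (t+δ)^p - 2t^p + (t-δ)^p` is a symmetric second
difference of `x ↦ x^p`. By the mean value theorem applied twice,
`|Δ_δ| ≲ |p(p-1)| (t-δ)^{p-2} δ²`, so after dividing by `h^p` the error is
`O(((t-h)/h)^{p-2})`. On the range `t ≥ φ(h)` this is at most `O((φ(h)/h - 1)^{p-2})`,
which tends to `0` because `φ(h)/h → ∞` and `p < 2`.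
-/

open Real Set Filter

/-- The class Ψ of continuous functions `φ : (0,T] → [0,∞)` with `φ(h) → 0`,
`L(h) = φ(h)/h → ∞` and `h·L(h)³ → 0` as `h ↓ 0`. -/
def MemPsi (T : ℝ) (φ : ℝ → ℝ) : Prop :=
  ContinuousOn φ (Ioc 0 T) ∧ (∀ h ∈ Ioc (0:ℝ) T, 0 ≤ φ h) ∧
  Tendsto φ (nhdsWithin 0 (Ioi 0)) (nhds 0) ∧
  Tendsto (fun h => φ h / h) (nhdsWithin 0 (Ioi 0)) atTop ∧
  Tendsto (fun h => h * (φ h / h) ^ 3) (nhdsWithin 0 (Ioi 0)) (nhds 0)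

/-- `Q(t,h) = E[(S^H_{t+h} − 2S^H_t + S^H_{t−h})²]` for sub-fractional Brownian motion. -/
noncomputable def subfBmQ (H t h : ℝ) : ℝ :=
  (4 - 2 ^ (2*H)) * h ^ (2*H) - 2 ^ (2*H - 1) * (t + h) ^ (2*H) - 3 * 2 ^ (2*H) * t ^ (2*H)
    - 2 ^ (2*H - 1) * (t - h) ^ (2*H) + 2 * (2*t + h) ^ (2*H) + 2 * (2*t - h) ^ (2*H)

theorem abs_second_diff_le {f f' f'' : ℝ → ℝ} {a δ M : ℝ} (hδ : 0 ≤ δ)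
    (hf : ∀ x ∈ Icc (a - δ) (a + δ), HasDerivAt f (f' x) x)
    (hf' : ∀ x ∈ Icc (a - δ) (a + δ), HasDerivAt f' (f'' x) x)
    (hM : ∀ x ∈ Icc (a - δ) (a + δ), |f'' x| ≤ M) :
    |f (a + δ) - 2 * f a + f (a - δ)| ≤ 2 * M * δ ^ 2 := by
  have mem : ∀ u ∈ Icc 0 δ,
      a + u ∈ Icc (a - δ) (a + δ) ∧ a - u ∈ Icc (a - δ) (a + δ) :=
    fun u ⟨hu0, huδ⟩ => ⟨⟨by linarith, by linarith⟩, ⟨by linarith, by linarith⟩⟩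
  have hM₀ : 0 ≤ M := (abs_nonneg _).trans (hM a ⟨by linarith, by linarith⟩)
  have hf'_lip : ∀ u ∈ Icc 0 δ, |f' (a + u) - f' (a - u)| ≤ 2 * M * δ := by
    intro u hu
    have := (convex_Icc _ _).norm_image_sub_le_of_norm_hasDerivWithin_le
      (fun x hx => (hf' x hx).hasDerivWithinAt) hM (mem u hu).2 (mem u hu).1
    rw [Real.norm_eq_abs, Real.norm_eq_abs, add_sub_sub_cancel,
      abs_of_nonneg (by linarith [hu.1] : 0 ≤ u + u)] at this
    nlinarith [hu.2]
  have hsym : ∀ u ∈ Icc 0 δ, HasDerivWithinAt (fun u => f (a + u) + f (a - u))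
      (f' (a + u) - f' (a - u)) (Icc 0 δ) u := fun u hu =>
    (((hf _ (mem u hu).1).comp_const_add a u).add
      ((hf _ (mem u hu).2).comp_const_sub a u)).hasDerivWithinAt
  have := (convex_Icc _ _).norm_image_sub_le_of_norm_hasDerivWithin_le hsym hf'_lip
    (left_mem_Icc.2 hδ) (right_mem_Icc.2 hδ)
  simp only [Real.norm_eq_abs, add_zero, sub_zero, abs_of_nonneg hδ] at this
  calc |f (a + δ) - 2 * f a + f (a - δ)| = |f (a + δ) + f (a - δ) - (f a + f a)| := by
        congr 1; ring
    _ ≤ 2 * M * δ * δ := this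
    _ = 2 * M * δ ^ 2 := by ring

theorem abs_rpow_second_diff_le {p t δ : ℝ} (hp : p ≤ 2) (hδ : 0 ≤ δ) (hδt : δ < t) :
    |(t + δ) ^ p - 2 * t ^ p + (t - δ) ^ p|
      ≤ 2 * (|p * (p - 1)| * (t - δ) ^ (p - 2)) * δ ^ 2 := by
  have hpos : ∀ x ∈ Icc (t - δ) (t + δ), 0 < x := fun x hx => by linarith [hx.1]
  refine abs_second_diff_le (f' := fun x => p * x ^ (p - 1))
    (f'' := fun x => p * ((p - 1) * x ^ (p - 1 - 1))) hδ
    (fun x hx => hasDerivAt_rpow_const (Or.inl (hpos x hx).ne'))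
    (fun x hx => (hasDerivAt_rpow_const (Or.inl (hpos x hx).ne')).const_mul p) fun x hx => ?_
  rw [← mul_assoc, abs_mul, sub_sub, one_add_one_eq_two,
    abs_of_pos (rpow_pos_of_pos (hpos x hx) _)]
  exact mul_le_mul_of_nonneg_left
    (rpow_le_rpow_of_nonpos (sub_pos.2 hδt) hx.1 (by linarith)) (abs_nonneg _)

theorem subfBmQ_sub_eq_second_diffs {H t h : ℝ} (hh : 0 ≤ h) (hht : h ≤ 2 * t) :
    subfBmQ H t h - (4 - 2 ^ (2*H)) * h ^ (2*H) = 2 ^ (2*H) *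
      (2 * ((t + h / 2) ^ (2*H) - 2 * t ^ (2*H) + (t - h / 2) ^ (2*H))
        - ((t + h) ^ (2*H) - 2 * t ^ (2*H) + (t - h) ^ (2*H)) / 2) := by
  have hplus : (2 * t + h) ^ (2*H) = 2 ^ (2*H) * (t + h / 2) ^ (2*H) := by
    rw [← mul_rpow zero_le_two (by linarith)]; ring_nf
  have hminus : (2 * t - h) ^ (2*H) = 2 ^ (2*H) * (t - h / 2) ^ (2*H) := by
    rw [← mul_rpow zero_le_two (by linarith)]; ring_nf
  rw [subfBmQ, hplus, hminus, rpow_sub two_pos, rpow_one]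
  ring

theorem abs_subfBmQ_div_sub_le {H t h : ℝ} (hH : H ≤ 1) (hh : 0 < h) (hht : h < t) :
    |subfBmQ H t h / h ^ (2*H) - (4 - 2 ^ (2*H))|
      ≤ 2 ^ (2*H) * (2 * |2*H * (2*H - 1)|) * ((t - h) / h) ^ (2*H - 2) := by
  have hp : 2 * H ≤ 2 := by linarith
  have hhp : 0 < h ^ (2*H) := rpow_pos_of_pos hh _
  have hΔ₁ := abs_rpow_second_diff_le hp (by linarith : 0 ≤ h / 2) (by linarith : h / 2 < t)
  have hΔ₂ := abs_rpow_second_diff_le hp hh.le hht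
  have hmono : (t - h / 2) ^ (2*H - 2) ≤ (t - h) ^ (2*H - 2) :=
    rpow_le_rpow_of_nonpos (by linarith) (by linarith) (by linarith)
  have hcombine : ∀ a b A B : ℝ,
      |a| ≤ 2 * A * (h / 2) ^ 2 → |b| ≤ 2 * B * h ^ 2 → A ≤ B →
      |2 * a - b / 2| ≤ 2 * B * h ^ 2 := fun a b A B ha hb hAB => by
    have := abs_sub (2 * a) (b / 2)
    rw [abs_mul, abs_div, abs_two] at this
    nlinarith [sq_nonneg h]
  have hnum : |subfBmQ H t h - (4 - 2 ^ (2*H)) * h ^ (2*H)|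
      ≤ 2 ^ (2*H) * (2 * |2*H * (2*H - 1)|) * (t - h) ^ (2*H - 2) * h ^ 2 := by
    rw [subfBmQ_sub_eq_second_diffs hh.le (by linarith), abs_mul,
      abs_of_pos (rpow_pos_of_pos two_pos _)]
    have := hcombine _ _ _ _ hΔ₁ hΔ₂ (mul_le_mul_of_nonneg_left hmono (abs_nonneg _))
    rw [mul_assoc, mul_assoc, mul_assoc]
    gcongr
    linarith
  have hscale : (t - h) ^ (2*H - 2) * h ^ 2 / h ^ (2*H) = ((t - h) / h) ^ (2*H - 2) := by
    rw [div_rpow (by linarith) hh.le, rpow_sub hh, rpow_two]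
    field_simp
  calc |subfBmQ H t h / h ^ (2*H) - (4 - 2 ^ (2*H))|
      = |subfBmQ H t h - (4 - 2 ^ (2*H)) * h ^ (2*H)| / h ^ (2*H) := by
        rw [← abs_of_pos hhp, ← abs_div, abs_of_pos hhp, sub_div,
          mul_div_cancel_right₀ _ hhp.ne']
    _ ≤ 2 ^ (2*H) * (2 * |2*H * (2*H - 1)|) * (t - h) ^ (2*H - 2) * h ^ 2 / h ^ (2*H) := by
        gcongr
    _ = 2 ^ (2*H) * (2 * |2*H * (2*H - 1)|) * ((t - h) / h) ^ (2*H - 2) := by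
        rw [← hscale]; ring

theorem subfBm_second_diff_convergence_general (H T : ℝ) (hH : H ∈ Set.Ioo (0:ℝ) 1)
    (φ : ℝ → ℝ) (hφ : MemPsi T φ) :
    Tendsto (fun h => ⨆ t ∈ Icc (φ h) (T - h), |subfBmQ H t h / h ^ (2*H) - (4 - 2 ^ (2*H))|)
      (nhdsWithin 0 (Ioi 0)) (nhds 0) := by
  obtain ⟨-, -, -, hL, -⟩ := hφ
  set C := 2 ^ (2*H) * (2 * |2*H * (2*H - 1)|)
  have hbound :
      Tendsto (fun h => C * (φ h / h - 1) ^ (2*H - 2)) (nhdsWithin 0 (Ioi 0)) (nhds 0) := by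
    have := (tendsto_rpow_neg_atTop (by linarith [hH.2] : 0 < 2 - 2*H)).comp
      (tendsto_atTop_add_const_right _ (-1) hL)
    simpa [Function.comp_def, sub_eq_add_neg, add_comm] using this.const_mul C
  refine squeeze_zero' (Eventually.of_forall fun h =>
    Real.iSup_nonneg fun t => Real.iSup_nonneg fun _ => abs_nonneg _) ?_ hbound
  filter_upwards [hL.eventually_gt_atTop 1, self_mem_nhdsWithin] with h hL1 (hh : 0 < h)
  have hC : 0 ≤ C * (φ h / h - 1) ^ (2*H - 2) := by positivity
  refine Real.iSup_le (fun t => Real.iSup_le (fun ht => ?_) hC) hC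
  have hφh : h < φ h := by rwa [one_lt_div hh] at hL1
  calc _ ≤ C * ((t - h) / h) ^ (2*H - 2) :=
        abs_subfBmQ_div_sub_le hH.2.le hh (hφh.trans_le ht.1)
    _ ≤ C * (φ h / h - 1) ^ (2*H - 2) := by
      refine mul_le_mul_of_nonneg_left
        (rpow_le_rpow_of_nonpos (by linarith) ?_ (by linarith [hH.2])) (by positivity)
      rw [sub_div, div_self hh.ne']
      gcongr
      exact ht.1

/-- For the sub-fractional Brownian motion and any `φ ∈ Ψ`,
`sup_{φ(h)≤t≤T−h} |Q(t,h)/h^{2H} − (4 − 2^{2H})| → 0` as `h ↓ 0`; i.e. the hypothesis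
of the regular-partition convergence result holds with `g₀ ≡ 4 − 2^{2H}` and `γ = H`. -/
theorem subfBm_second_diff_convergence (H T : ℝ) (hH : H ∈ Set.Ioo (0:ℝ) 1) (hT : 0 < T)
    (φ : ℝ → ℝ) (hφ : MemPsi T φ) :
    Tendsto (fun h => ⨆ t ∈ Icc (φ h) (T - h), |subfBmQ H t h / h ^ (2*H) - (4 - 2 ^ (2*H))|)
      (nhdsWithin 0 (Ioi 0)) (nhds 0) :=
  subfBm_second_diff_convergence_general H T hH φ hφ
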